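/- Let A ∈ ℝ^{m×n}, E ∈ ℝ^{p×n}, b ∈ ℝ^m, e ∈ ℝ^p, and suppose the polyhedral set M(0) = {x : Ax = b, Ex ≤ e} is nonempty. Then there exists κ ≥ 0 such that for every x with Ex ≤ e, dist(x, M(0)) ≤ κ‖Ax − b‖ (Hoffman-type error bound for the perturbed system M(p) = {x : Ax − b = p, Ex ≤ e}). -/

import Mathlib

open Metric

set_option synthInstance.maxHeartbeats 1000000 in
set_option maxHeartbeats 1000000 in
lemma hoffman_base {n : ℕ} {W : Type} [NormedAddCommGroup W] [NormedSpace ℝ W]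
    (A : EuclideanSpace ℝ (Fin n) →ₗ[ℝ] W) :
    ∃ κ : ℝ, 0 ≤ κ ∧ ∀ b ∈ LinearMap.range A, ∀ x : EuclideanSpace ℝ (Fin n),
      ∃ u : EuclideanSpace ℝ (Fin n), A (x - u) = b ∧ ‖u‖ ≤ κ * ‖A x - b‖ := by
  set K := (LinearMap.ker A)ᗮ with hK
  set L : K →ₗ[ℝ] W := A.comp K.subtype with hL
  have hinj : Function.Injective L := by
    rw [← LinearMap.ker_eq_bot, Submodule.eq_bot_iff]
    rintro ⟨v, hvK⟩ hv
    have hv0 : A v = 0 := hv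
    have h1 : v ∈ LinearMap.ker A := hv0
    exact Subtype.ext (inner_self_eq_zero.mp (hvK v h1))
  set ψ := LinearEquiv.ofInjective L hinj with hψ
  set S : LinearMap.range L →ₗ[ℝ] K := ψ.symm.toLinearMap with hS
  set T := LinearMap.toContinuousLinearMap S with hT
  refine ⟨‖T‖, ContinuousLinearMap.opNorm_nonneg T, ?_⟩
  rintro b ⟨x₀, rfl⟩ x
  have hrange : ∀ v : EuclideanSpace ℝ (Fin n), A v ∈ LinearMap.range L := by
    intro v
    have hcompl : IsCompl (LinearMap.ker A) K :=
      Submodule.isCompl_orthogonal_of_hasOrthogonalProjection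
    obtain ⟨a, c, ha, hc, hac⟩ :=
      Submodule.codisjoint_iff_exists_add_eq.mp hcompl.codisjoint v
    refine ⟨⟨c, hc⟩, ?_⟩
    have hv : A v = A a + A c := by rw [← hac]; exact map_add A a c
    have ha0 : A a = 0 := ha
    simp [hL, hv, ha0]
  have hmem : A x - A x₀ ∈ LinearMap.range L := by
    rw [← map_sub A x x₀]; exact hrange _
  set w : LinearMap.range L := ⟨A x - A x₀, hmem⟩ with hw
  set u : K := S w with hu
  have hAu : A (u : EuclideanSpace ℝ (Fin n)) = A x - A x₀ := by
    have h1 : L u = (ψ u : W) := by simp [hψ, LinearEquiv.ofInjective_apply]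
    have h2 : ψ u = w := by rw [hu, hS]; exact ψ.apply_symm_apply w
    have : L u = (w : W) := by rw [h1, h2]
    simpa [hL] using this
  refine ⟨(u : EuclideanSpace ℝ (Fin n)), ?_, ?_⟩
  · rw [map_sub, hAu]; abel
  · have h3 : ‖T w‖ ≤ ‖T‖ * ‖w‖ := T.le_opNorm w
    exact h3

set_option maxHeartbeats 2000000 in
theorem hoffman_aux (n : ℕ) : ∀ (p : ℕ) (W : Type) [NormedAddCommGroup W] [NormedSpace ℝ W]
    (A : EuclideanSpace ℝ (Fin n) →ₗ[ℝ] W) (b : W)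
    (g : Fin p → (EuclideanSpace ℝ (Fin n) →ₗ[ℝ] ℝ)) (e : Fin p → ℝ),
    ({x : EuclideanSpace ℝ (Fin n) | A x = b ∧ ∀ i, g i x ≤ e i}).Nonempty →
    ∃ κ : ℝ, 0 ≤ κ ∧ ∀ x : EuclideanSpace ℝ (Fin n), (∀ i, g i x ≤ e i) →
      infDist x {x' : EuclideanSpace ℝ (Fin n) | A x' = b ∧ ∀ i, g i x' ≤ e i}
        ≤ κ * ‖A x - b‖ := by
  intro p
  induction p with
  | zero =>
    intro W _ _ A b g e hne
    obtain ⟨κ, hκ0, hκ⟩ := hoffman_base A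
    obtain ⟨x₀, hx₀, -⟩ := hne
    have hb : b ∈ LinearMap.range A := ⟨x₀, hx₀⟩
    refine ⟨κ, hκ0, ?_⟩
    intro x _
    obtain ⟨u, hu1, hu2⟩ := hκ b hb x
    have hmem : x - u ∈ {x' : EuclideanSpace ℝ (Fin n) | A x' = b ∧ ∀ i, g i x' ≤ e i} :=
      ⟨hu1, fun i => i.elim0⟩
    calc infDist x _ ≤ dist x (x - u) := infDist_le_dist_of_mem hmem
    _ = ‖u‖ := by rw [dist_eq_norm]; congr 1; abel
    _ ≤ κ * ‖A x - b‖ := hu2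
  | succ p ih =>
    intro W _ _ A b g e hne
    set gr : Fin p → (EuclideanSpace ℝ (Fin n) →ₗ[ℝ] ℝ) := fun i => g i.castSucc with hgr
    set er : Fin p → ℝ := fun i => e i.castSucc with her
    set gl : EuclideanSpace ℝ (Fin n) →ₗ[ℝ] ℝ := g (Fin.last p) with hgl
    set f : ℝ := e (Fin.last p) with hf
    set M : Set (EuclideanSpace ℝ (Fin n)) :=
      {x' | A x' = b ∧ ∀ i, g i x' ≤ e i} with hM
    set M₁ : Set (EuclideanSpace ℝ (Fin n)) :=
      {x' | A x' = b ∧ ∀ i, gr i x' ≤ er i} with hM₁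
    have hne₁ : M₁.Nonempty := by
      obtain ⟨x₀, h1, h2⟩ := hne
      exact ⟨x₀, h1, fun i => h2 i.castSucc⟩
    obtain ⟨κ₁, hκ₁0, hκ₁⟩ := ih W A b gr er hne₁
    set A₂ : EuclideanSpace ℝ (Fin n) →ₗ[ℝ] W × ℝ := A.prod gl with hA₂
    set b₂ : W × ℝ := (b, f) with hb₂
    set M₂ : Set (EuclideanSpace ℝ (Fin n)) :=
      {x' | A₂ x' = b₂ ∧ ∀ i, gr i x' ≤ er i} with hM₂
    have hM₂sub : M₂ ⊆ M := by
      rintro x' ⟨hx'1, hx'2⟩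
      have hA : A x' = b := congrArg Prod.fst hx'1
      have hgl' : gl x' = f := congrArg Prod.snd hx'1
      refine ⟨hA, ?_⟩
      intro i
      induction i using Fin.lastCases with
      | last => exact le_of_eq hgl'
      | cast i => exact hx'2 i
    -- helper: a point in M₂ from y with gl y > f and a point w with gl w ≤ f
    have hseg : ∀ y w : EuclideanSpace ℝ (Fin n), A y = b → (∀ i, gr i y ≤ er i) →
        f < gl y → A w = b → (∀ i, gr i w ≤ er i) → gl w ≤ f → M₂.Nonempty := by
      intro y w hyA hyr hyl hwA hwr hwl
      set s : ℝ := (gl y - f) / (gl y - gl w) with hs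
      have hden : 0 < gl y - gl w := by linarith
      have hs0 : 0 ≤ s := le_of_lt (div_pos (by linarith) hden)
      have hs1 : s ≤ 1 := (div_le_one hden).mpr (by linarith)
      refine ⟨y + s • (w - y), ?_, ?_⟩
      · have h1 : A (y + s • (w - y)) = b := by
          rw [map_add, map_smul, map_sub, hyA, hwA]; simp
        have h2 : gl (y + s • (w - y)) = f := by
          rw [map_add, map_smul, map_sub]
          have : s * (gl y - gl w) = gl y - f := div_mul_cancel₀ _ (ne_of_gt hden)
          simp only [smul_eq_mul]
          nlinarith [this]
        rw [hA₂]
        exact Prod.ext (by simpa using h1) (by simpa using h2)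
      · intro i
        have h3 : gr i (y + s • (w - y)) = gr i y + s * (gr i w - gr i y) := by
          rw [map_add, map_smul, map_sub]; simp
        rw [h3]
        nlinarith [hyr i, hwr i]
    by_cases hM₂ne : M₂.Nonempty
    · obtain ⟨κ₂, hκ₂0, hκ₂⟩ := ih (W × ℝ) A₂ b₂ gr er hM₂ne
      refine ⟨κ₁ + κ₂, by positivity, ?_⟩
      intro x hx
      refine le_of_forall_pos_le_add ?_
      intro ε hε
      have h1 : infDist x M₁ < κ₁ * ‖A x - b‖ + ε :=
        lt_of_le_of_lt (hκ₁ x fun i => hx i.castSucc) (by linarith)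
      obtain ⟨y, hyM₁, hxy⟩ := (infDist_lt_iff hne₁).mp h1
      obtain ⟨hyA, hyr⟩ := hyM₁
      by_cases hy : gl y ≤ f
      · have hyM : y ∈ M := by
          refine ⟨hyA, ?_⟩
          intro i
          induction i using Fin.lastCases with
          | last => exact hy
          | cast i => exact hyr i
        have hd : infDist x M ≤ dist x y := infDist_le_dist_of_mem hyM
        nlinarith [mul_nonneg hκ₂0 (norm_nonneg (A x - b))]
      · push_neg at hy
        have hxl : gl x ≤ f := hx (Fin.last p)
        set t : ℝ := (gl y - f) / (gl y - gl x) with ht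
        have hden : 0 < gl y - gl x := by linarith
        have ht0 : 0 ≤ t := le_of_lt (div_pos (by linarith) hden)
        have ht1 : t ≤ 1 := (div_le_one hden).mpr (by linarith)
        set z := y + t • (x - y) with hz
        have hzr : ∀ i, gr i z ≤ er i := by
          intro i
          have h3 : gr i z = gr i y + t * (gr i x - gr i y) := by
            rw [hz, map_add, map_smul, map_sub]; simp
          rw [h3]
          nlinarith [hyr i, hx i.castSucc]
        have hzl : gl z = f := by
          rw [hz, map_add, map_smul, map_sub]
          have : t * (gl y - gl x) = gl y - f := div_mul_cancel₀ _ (ne_of_gt hden)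
          simp only [smul_eq_mul]
          nlinarith [this]
        have hzA : A z = b + t • (A x - b) := by
          rw [hz, map_add, map_smul, map_sub, hyA]
          try abel
        have hres : A₂ z - b₂ = (t • (A x - b), (0:ℝ)) := by
          rw [hA₂, hb₂]
          refine Prod.ext ?_ ?_
          · simpa using congrArg (fun v => v - b) hzA
          · simpa using sub_eq_zero_of_eq hzl
        have hresn : ‖A₂ z - b₂‖ = t * ‖A x - b‖ := by
          rw [hres, Prod.norm_def]
          simp [norm_smul, Real.norm_of_nonneg ht0, max_eq_left,
            mul_nonneg ht0 (norm_nonneg _)]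
        have h4 : infDist z M₂ ≤ κ₂ * (t * ‖A x - b‖) := by
          have := hκ₂ z hzr
          rwa [hresn] at this
        have h5 : infDist z M ≤ infDist z M₂ := infDist_le_infDist_of_subset hM₂sub hM₂ne
        have h6 : infDist x M ≤ infDist z M + dist x z := infDist_le_infDist_add_dist
        have h7 : dist x z ≤ dist x y := by
          have hxz : x - z = (1 - t) • (x - y) := by
            rw [hz]; module
          rw [dist_eq_norm, hxz, dist_eq_norm, norm_smul, Real.norm_of_nonneg (by linarith)]
          nlinarith [norm_nonneg (x - y)]
        have h8 : κ₂ * (t * ‖A x - b‖) ≤ κ₂ * ‖A x - b‖ := by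
          apply mul_le_mul_of_nonneg_left _ hκ₂0
          nlinarith [norm_nonneg (A x - b)]
        nlinarith
    · refine ⟨κ₁, hκ₁0, ?_⟩
      intro x hx
      refine le_of_forall_pos_le_add ?_
      intro ε hε
      have h1 : infDist x M₁ < κ₁ * ‖A x - b‖ + ε :=
        lt_of_le_of_lt (hκ₁ x fun i => hx i.castSucc) (by linarith)
      obtain ⟨y, hyM₁, hxy⟩ := (infDist_lt_iff hne₁).mp h1
      obtain ⟨hyA, hyr⟩ := hyM₁
      by_cases hy : gl y ≤ f
      · have hyM : y ∈ M := by
          refine ⟨hyA, ?_⟩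
          intro i
          induction i using Fin.lastCases with
          | last => exact hy
          | cast i => exact hyr i
        have hd : infDist x M ≤ dist x y := infDist_le_dist_of_mem hyM
        linarith
      · push_neg at hy
        obtain ⟨w, hwA, hwr⟩ := hne
        exact absurd (hseg y w hyA hyr hy hwA (fun i => hwr i.castSucc) (hwr (Fin.last p)))
          hM₂ne


/-- Hoffman-type error bound: if the polyhedron `{x : Ax = b, Ex ≤ e}` is
nonempty, then there is `κ ≥ 0` such that every `x` satisfying the inequality constraints obeys
`dist(x, M(0)) ≤ κ‖Ax − b‖`. -/
theorem hoffman_error_bound {n m p : ℕ}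
    (A : EuclideanSpace ℝ (Fin n) →ₗ[ℝ] EuclideanSpace ℝ (Fin m))
    (E : EuclideanSpace ℝ (Fin n) →ₗ[ℝ] EuclideanSpace ℝ (Fin p))
    (b : EuclideanSpace ℝ (Fin m)) (e : EuclideanSpace ℝ (Fin p))
    (hne : {x : EuclideanSpace ℝ (Fin n) | A x = b ∧ ∀ i, E x i ≤ e i}.Nonempty) :
    ∃ κ : ℝ, 0 ≤ κ ∧ ∀ x : EuclideanSpace ℝ (Fin n), (∀ i, E x i ≤ e i) →
      infDist x {x' : EuclideanSpace ℝ (Fin n) | A x' = b ∧ ∀ i, E x' i ≤ e i}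
        ≤ κ * ‖A x - b‖ := by
  set g : Fin p → (EuclideanSpace ℝ (Fin n) →ₗ[ℝ] ℝ) :=
    fun i => (EuclideanSpace.proj i).toLinearMap ∘ₗ E with hg
  have hgapp : ∀ (i : Fin p) (x : EuclideanSpace ℝ (Fin n)), g i x = E x i := by
    intro i x; rfl
  have hset : {x' : EuclideanSpace ℝ (Fin n) | A x' = b ∧ ∀ i, g i x' ≤ e i} =
      {x' : EuclideanSpace ℝ (Fin n) | A x' = b ∧ ∀ i, E x' i ≤ e i} := by
    ext x'; simp only [Set.mem_setOf_eq, hgapp]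
  obtain ⟨κ, hκ0, hκ⟩ := hoffman_aux n p (EuclideanSpace ℝ (Fin m)) A b g (fun i => e i)
    (by rw [hset]; exact hne)
  refine ⟨κ, hκ0, ?_⟩
  intro x hx
  have := hκ x (by intro i; rw [hgapp]; exact hx i)
  rwa [hset] at this
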